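/- Under the sandwich σ² + ‖θ‖²/T ≤ s ≤ exp(1/T)·(σ² + ‖θ‖²/T), the Gaussian KL divergence KL(N(θ, σ²I_T) ‖ N(0, s I_T)) = (1/2)[(Tσ² + ‖θ‖²)/s - T + T·log(s/σ²)] is at most (1/2)[1 + T·log(1 + ‖θ‖²/(Tσ²))]. -/

import Mathlib

theorem kl_bound_of_sandwich {T : ℕ} (hT : 1 ≤ T)
    (θ : EuclideanSpace ℝ (Fin T)) (σ s : ℝ) (hσ : σ > 0) (hs : s > 0)
    (h₁ : σ ^ 2 + ‖θ‖ ^ 2 / T ≤ s)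
    (h₂ : s ≤ Real.exp (1 / T) * (σ ^ 2 + ‖θ‖ ^ 2 / T)) :
    (1 / 2) * ((T * σ ^ 2 + ‖θ‖ ^ 2) / s - T + T * Real.log (s / σ ^ 2)) ≤
      (1 / 2) * (1 + T * Real.log (1 + ‖θ‖ ^ 2 / (T * σ ^ 2))) := by
  have hTpos : (0:ℝ) < T := by positivity
  have hσ2 : (0:ℝ) < σ ^ 2 := by positivity
  have hnn : (0:ℝ) ≤ ‖θ‖ ^ 2 := by positivity
  have hA : (0:ℝ) < σ ^ 2 + ‖θ‖ ^ 2 / T := by positivity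
  -- first part: (Tσ²+‖θ‖²)/s ≤ T
  have key1 : (T * σ ^ 2 + ‖θ‖ ^ 2) / s ≤ T := by
    rw [div_le_iff₀ hs]
    have : T * (σ ^ 2 + ‖θ‖ ^ 2 / T) ≤ T * s := by
      exact mul_le_mul_of_nonneg_left h₁ (le_of_lt hTpos)
    calc T * σ ^ 2 + ‖θ‖ ^ 2 = T * (σ ^ 2 + ‖θ‖ ^ 2 / T) := by
          field_simp
      _ ≤ T * s := this
  -- second part: log(s/σ²) ≤ 1/T + log(1+‖θ‖²/(Tσ²))
  have key2 : Real.log (s / σ ^ 2) ≤ 1 / T + Real.log (1 + ‖θ‖ ^ 2 / (T * σ ^ 2)) := by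
    have h3 : s / σ ^ 2 ≤ Real.exp (1 / T) * (1 + ‖θ‖ ^ 2 / (T * σ ^ 2)) := by
      rw [div_le_iff₀ hσ2]
      calc s ≤ Real.exp (1 / T) * (σ ^ 2 + ‖θ‖ ^ 2 / T) := h₂
        _ = Real.exp (1 / T) * (1 + ‖θ‖ ^ 2 / (T * σ ^ 2)) * σ ^ 2 := by
            field_simp
    have hpos3 : (0:ℝ) < Real.exp (1 / T) * (1 + ‖θ‖ ^ 2 / (T * σ ^ 2)) := by positivity
    calc Real.log (s / σ ^ 2) ≤ Real.log (Real.exp (1 / T) * (1 + ‖θ‖ ^ 2 / (T * σ ^ 2))) :=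
          Real.log_le_log (by positivity) h3
      _ = 1 / T + Real.log (1 + ‖θ‖ ^ 2 / (T * σ ^ 2)) := by
          rw [Real.log_mul (by positivity) (by positivity), Real.log_exp]
  have key2' : (T:ℝ) * Real.log (s / σ ^ 2) ≤ 1 + T * Real.log (1 + ‖θ‖ ^ 2 / (T * σ ^ 2)) := by
    calc (T:ℝ) * Real.log (s / σ ^ 2)
        ≤ T * (1 / T + Real.log (1 + ‖θ‖ ^ 2 / (T * σ ^ 2))) :=
          mul_le_mul_of_nonneg_left key2 (le_of_lt hTpos)
      _ = 1 + T * Real.log (1 + ‖θ‖ ^ 2 / (T * σ ^ 2)) := by field_simp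
  have : (T * σ ^ 2 + ‖θ‖ ^ 2) / s - T + T * Real.log (s / σ ^ 2) ≤
      1 + T * Real.log (1 + ‖θ‖ ^ 2 / (T * σ ^ 2)) := by
    have := key1
    linarith
  linarith
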